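/- For every f : {-1,1}^n → ℝ of degree at most d and every α ∈ (0,1], ‖T_α f‖_1 ≥ α^{d²} ‖f‖_1, where T_α is the noise operator and ‖·‖_1 the L1 norm over the uniform measure. -/

import Mathlib

/-!
Put `β = α⁻¹` and `g = T_α f`, so that `f = T_β g`. Lagrange interpolation at the Chebyshev
extremal nodes `νᵢ = cos (iπ/d)` gives weights `wᵢ` with `∑ᵢ wᵢ νᵢ^k = β^k` for `k ≤ d`; on
polynomials of degree at most `d` this means `T_β g = ∑ᵢ wᵢ T_{νᵢ} g`. Each `T_ν` with `|ν| ≤ 1`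
averages translates of `g`, so it does not increase the `L¹` norm, and `‖f‖₁ ≤ (∑ᵢ |wᵢ|) ‖g‖₁`.
Since `β ≥ 1`, the weights alternate in sign exactly as `T_d` does on the nodes, so
`∑ᵢ |wᵢ| = T_d(β) = cosh (d t)` where `cosh t = β`, and `cosh (d t) ≤ (cosh t)^(d²)` by induction
on `d`.
-/

open Finset

/-- The Fourier character χ_S evaluated at a point of the Boolean cube
(coordinates encoded by `Bool`, with `true ↦ 1` and `false ↦ -1`). -/
noncomputable def char {n : ℕ} (S : Finset (Fin n)) (x : Fin n → Bool) : ℝ :=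
  ∏ i ∈ S, (if x i then (1 : ℝ) else -1)

/-- The multilinear polynomial with Fourier coefficients `c`, evaluated on the cube. -/
noncomputable def eval' {n : ℕ} (c : Finset (Fin n) → ℝ) (x : Fin n → Bool) : ℝ :=
  ∑ S : Finset (Fin n), c S * char S x

/-- Flip the i-th coordinate. -/
def flipAt {n : ℕ} (x : Fin n → Bool) (i : Fin n) : Fin n → Bool :=
  Function.update x i (!(x i))

/-- Expectation over the uniform measure on the cube. -/
noncomputable def Ex {n : ℕ} (g : (Fin n → Bool) → ℝ) : ℝ :=
  (∑ x : Fin n → Bool, g x) / 2 ^ n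

namespace Real

theorem cosh_sinh_nat_mul_le {t : ℝ} (ht : 0 ≤ t) (d : ℕ) :
    cosh (d * t) ≤ cosh t ^ d ^ 2 ∧ sinh (d * t) ≤ d * cosh t ^ d ^ 2 * sinh t := by
  induction d with
  | zero => simp
  | succ d ih =>
    obtain ⟨hc, hs⟩ := ih
    have hC : 1 ≤ cosh t := one_le_cosh t
    have hS : 0 ≤ sinh t := sinh_nonneg_iff.mpr ht
    have hSd : 0 ≤ sinh (d * t) := sinh_nonneg_iff.mpr (by positivity)
    have hS2 : sinh t ^ 2 = cosh t ^ 2 - 1 := by linarith [cosh_sq_sub_sinh_sq t]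
    have hpow : cosh t ^ (d + 1) ^ 2 = cosh t ^ d ^ 2 * (cosh t * (cosh t ^ 2) ^ d) := by
      rw [← pow_mul, ← pow_succ', ← pow_add]; ring_nf
    have hbern : 1 + d * (cosh t ^ 2 - 1) ≤ (cosh t ^ 2) ^ d :=
      one_add_mul_sub_le_pow (by nlinarith) d
    push_cast
    rw [add_mul, one_mul, cosh_add, sinh_add, hpow]
    constructor
    · calc cosh (d * t) * cosh t + sinh (d * t) * sinh t
          ≤ cosh t ^ d ^ 2 * cosh t + d * cosh t ^ d ^ 2 * sinh t * sinh t := by gcongr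
        _ = cosh t ^ d ^ 2 * (cosh t + d * (cosh t ^ 2 - 1)) := by rw [← hS2]; ring
        _ ≤ cosh t ^ d ^ 2 * (cosh t * (cosh t ^ 2) ^ d) := by
            have hd : 0 ≤ (d : ℝ) * (cosh t ^ 2 - 1) := by rw [← hS2]; positivity
            gcongr; nlinarith [mul_le_mul_of_nonneg_left hbern (by linarith : 0 ≤ cosh t)]
    · calc sinh (d * t) * cosh t + cosh (d * t) * sinh t
          ≤ d * cosh t ^ d ^ 2 * sinh t * cosh t + cosh t ^ d ^ 2 * sinh t := by gcongr
        _ = cosh t ^ d ^ 2 * sinh t * (d * cosh t + 1) := by ring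
        _ ≤ cosh t ^ d ^ 2 * sinh t * ((d + 1) * (cosh t * (cosh t ^ 2) ^ d)) := by
            have : 1 ≤ (cosh t ^ 2) ^ d := one_le_pow₀ (one_le_pow₀ hC)
            have hdC : (0 : ℝ) ≤ (d + 1) * cosh t := by positivity
            gcongr; nlinarith [mul_le_mul_of_nonneg_left this hdC]
        _ = (d + 1) * (cosh t ^ d ^ 2 * (cosh t * (cosh t ^ 2) ^ d)) * sinh t := by ring

end Real

open Polynomial

namespace Lagrange

variable {F ι : Type*} [Field F] [DecidableEq ι]

theorem eval_basis (s : Finset ι) (v : ι → F) (i : ι) (x : F) :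
    (Lagrange.basis s v i).eval x =
      (∏ j ∈ s.erase i, (x - v j)) / ∏ j ∈ s.erase i, (v i - v j) := by
  simp [Lagrange.basis, basisDivisor, eval_prod, prod_mul_distrib, div_eq_inv_mul,
    prod_inv_distrib]

theorem eval_eq_sum_eval_mul_eval_basis {s : Finset ι} {v : ι → F} (hvs : Set.InjOn v s)
    {P : F[X]} (hP : P.degree < #s) (x : F) :
    P.eval x = ∑ i ∈ s, P.eval (v i) * (Lagrange.basis s v i).eval x := by
  conv_lhs => rw [eq_interpolate hvs hP]
  simp [interpolate_apply, eval_finsetSum]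

end Lagrange

namespace Polynomial.Chebyshev

open Real

noncomputable def nodeWeight (n i : ℕ) (x : ℝ) : ℝ :=
  (Lagrange.basis (range (n + 1)) (node n) i).eval x

theorem eval_eq_sum_eval_node_mul_nodeWeight {n : ℕ} {P : ℝ[X]} (hP : P.degree ≤ n) (x : ℝ) :
    P.eval x = ∑ i ∈ range (n + 1), P.eval (node n i) * nodeWeight n i x :=
  Lagrange.eval_eq_sum_eval_mul_eval_basis (strictAntiOn_node n).injOn
    (hP.trans_lt (by rw [card_range]; exact_mod_cast n.lt_succ_self)) x

theorem negOnePow_mul_nodeWeight_nonneg {n i : ℕ} (hi : i ≤ n) {x : ℝ} (hx : 1 ≤ x) :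
    0 ≤ (-1) ^ i * nodeWeight n i x := by
  have hnum : 0 ≤ ∏ j ∈ (range (n + 1)).erase i, (x - node n j) :=
    prod_nonneg fun j _ => sub_nonneg.mpr (node_mem_Icc.2.trans hx)
  have h := div_nonneg hnum (zero_lt_prod_node_sub_node hi).le
  rwa [div_eq_mul_inv, mul_inv, ← inv_pow, inv_neg_one, mul_left_comm, ← div_eq_mul_inv,
    ← Lagrange.eval_basis] at h

theorem sum_abs_nodeWeight (n : ℕ) {x : ℝ} (hx : 1 ≤ x) :
    ∑ i ∈ range (n + 1), |nodeWeight n i x| = (T ℝ n).eval x := by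
  rw [eval_eq_sum_eval_node_mul_nodeWeight (n := n) (by simp [degree_T]) x]
  refine sum_congr rfl fun i hi => ?_
  have hi' : i ≤ n := Nat.lt_succ_iff.mp (mem_range.mp hi)
  rw [eval_T_real_node (mem_Iic.mpr hi'),
    ← abs_of_nonneg (negOnePow_mul_nodeWeight_nonneg hi' hx), abs_mul, abs_neg_one_pow, one_mul]

theorem eval_T_real_le_pow (n : ℕ) {x : ℝ} (hx : 1 ≤ x) : (T ℝ n).eval x ≤ x ^ n ^ 2 := by
  obtain ⟨t, ht, rfl⟩ : ∃ t, 0 ≤ t ∧ cosh t = x := ⟨arcosh x, arcosh_nonneg hx, cosh_arcosh hx⟩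
  have h := T_real_cosh t n
  push_cast at h
  exact h ▸ (cosh_sinh_nat_mul_le ht n).1

end Polynomial.Chebyshev

noncomputable def noise {n : ℕ} (ρ : ℝ) (c : Finset (Fin n) → ℝ) : Finset (Fin n) → ℝ :=
  fun S => ρ ^ S.card * c S

theorem noise_noise {n : ℕ} (ρ σ : ℝ) (c : Finset (Fin n) → ℝ) :
    noise ρ (noise σ c) = noise (ρ * σ) c := by
  funext S
  simp only [noise, mul_pow, mul_assoc]

theorem noise_one {n : ℕ} (c : Finset (Fin n) → ℝ) : noise 1 c = c := by
  funext S
  simp [noise]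

section Expectation

variable {n : ℕ}

theorem Ex_mono {f g : (Fin n → Bool) → ℝ} (h : ∀ x, f x ≤ g x) : Ex f ≤ Ex g :=
  div_le_div_of_nonneg_right (sum_le_sum fun x _ => h x) (by positivity)

theorem Ex_nonneg {f : (Fin n → Bool) → ℝ} (h : ∀ x, 0 ≤ f x) : 0 ≤ Ex f :=
  div_nonneg (sum_nonneg fun x _ => h x) (by positivity)

theorem Ex_const_mul (a : ℝ) (f : (Fin n → Bool) → ℝ) : Ex (fun x => a * f x) = a * Ex f := by
  simp only [Ex, ← mul_sum, mul_div_assoc]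

theorem Ex_sum {ι : Type*} (s : Finset ι) (f : ι → (Fin n → Bool) → ℝ) :
    Ex (fun x => ∑ i ∈ s, f i x) = ∑ i ∈ s, Ex (f i) := by
  simp only [Ex, sum_div]
  exact sum_comm

theorem Ex_comp_of_bijective {e : (Fin n → Bool) → Fin n → Bool} (he : Function.Bijective e)
    (f : (Fin n → Bool) → ℝ) : Ex (f ∘ e) = Ex f := by
  simp only [Ex, Function.comp_apply]
  rw [Fintype.sum_bijective e he _ _ fun x => rfl]

end Expectation

-- `==` on `Bool` is multiplication of the `±1` encodings.
theorem char_xnor {n : ℕ} (S : Finset (Fin n)) (x z : Fin n → Bool) :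
    char S (fun i => x i == z i) = char S x * char S z := by
  simp only [char, ← prod_mul_distrib]
  refine prod_congr rfl fun i _ => ?_
  by_cases hx : x i <;> by_cases hz : z i <;> simp [hx, hz]

noncomputable def noiseKernel {n : ℕ} (ρ : ℝ) (z : Fin n → Bool) : ℝ :=
  ∏ i, if z i then (1 + ρ) / 2 else (1 - ρ) / 2

theorem noiseKernel_nonneg {n : ℕ} {ρ : ℝ} (hρ : |ρ| ≤ 1) (z : Fin n → Bool) :
    0 ≤ noiseKernel ρ z := by
  obtain ⟨hρ₁, hρ₂⟩ := abs_le.mp hρ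
  refine prod_nonneg fun i _ => ?_
  split_ifs <;> linarith

theorem sum_noiseKernel_mul_char {n : ℕ} (ρ : ℝ) (S : Finset (Fin n)) :
    ∑ z, noiseKernel ρ z * char S z = ρ ^ S.card := by
  set f : Fin n → Bool → ℝ := fun i b => (if b then (1 + ρ) / 2 else (1 - ρ) / 2) *
    (if i ∈ S then (if b then 1 else -1) else 1)
  have hsplit (z : Fin n → Bool) : noiseKernel ρ z * char S z = ∏ i, f i (z i) := by
    rw [char, ← univ_inter S, ← prod_ite_mem, noiseKernel, ← prod_mul_distrib]
  have hfactor (i : Fin n) : ∑ b, f i b = if i ∈ S then ρ else 1 := by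
    split_ifs <;> simp [f, *] <;> ring
  rw [sum_congr rfl fun z _ => hsplit z, ← Fintype.prod_sum, prod_congr rfl fun i _ => hfactor i,
    prod_ite_mem, univ_inter, prod_const]

theorem sum_noiseKernel {n : ℕ} (ρ : ℝ) : ∑ z : Fin n → Bool, noiseKernel ρ z = 1 := by
  simpa [char] using sum_noiseKernel_mul_char (n := n) ρ ∅

theorem eval'_noise {n : ℕ} (ρ : ℝ) (c : Finset (Fin n) → ℝ) (x : Fin n → Bool) :
    eval' (noise ρ c) x = ∑ z, noiseKernel ρ z * eval' c (fun i => x i == z i) := by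
  simp only [eval', noise, char_xnor, mul_sum]
  rw [sum_comm]
  refine sum_congr rfl fun S _ => ?_
  rw [← sum_noiseKernel_mul_char ρ S, sum_mul, sum_mul]
  refine sum_congr rfl fun z _ => by ring

theorem Ex_abs_eval'_noise_le {n : ℕ} {ρ : ℝ} (hρ : |ρ| ≤ 1) (c : Finset (Fin n) → ℝ) :
    Ex (fun x => |eval' (noise ρ c) x|) ≤ Ex (fun x => |eval' c x|) :=
  have hxnor (z : Fin n → Bool) : Function.Involutive fun x i => x i == z i := fun x =>
    funext fun i => show ((x i == z i) == z i) = x i by cases x i <;> cases z i <;> rfl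
  calc Ex (fun x => |eval' (noise ρ c) x|)
      ≤ Ex (fun x => ∑ z, noiseKernel ρ z * |eval' c (fun i => x i == z i)|) := Ex_mono fun x => by
        rw [eval'_noise]
        refine (abs_sum_le_sum_abs _ _).trans_eq (sum_congr rfl fun z _ => ?_)
        rw [abs_mul, abs_of_nonneg (noiseKernel_nonneg hρ z)]
    _ = ∑ z, noiseKernel ρ z * Ex (fun x => |eval' c x|) := by
        rw [Ex_sum]
        refine sum_congr rfl fun z _ => ?_
        rw [Ex_const_mul]
        exact congrArg _ (Ex_comp_of_bijective (hxnor z).bijective fun y => |eval' c y|)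
    _ = Ex (fun x => |eval' c x|) := by rw [← sum_mul, sum_noiseKernel, one_mul]

theorem eval'_noise_eq_sum_of_moments {n d : ℕ} {ι : Type*} {s : Finset ι} {a ρ : ι → ℝ} {β : ℝ}
    (hmom : ∀ k ≤ d, ∑ i ∈ s, a i * ρ i ^ k = β ^ k) {c : Finset (Fin n) → ℝ}
    (hdeg : ∀ S, c S ≠ 0 → S.card ≤ d) (x : Fin n → Bool) :
    eval' (noise β c) x = ∑ i ∈ s, a i * eval' (noise (ρ i) c) x := by
  simp only [eval', noise, mul_sum]
  rw [sum_comm]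
  refine sum_congr rfl fun S _ => ?_
  by_cases hc : c S = 0
  · simp [hc]
  rw [← hmom _ (hdeg S hc), sum_mul, sum_mul]
  exact sum_congr rfl fun i _ => by ring

theorem Ex_abs_eval'_noise_le_of_moments {n d : ℕ} {ι : Type*} {s : Finset ι} {a ρ : ι → ℝ}
    {β : ℝ} (hmom : ∀ k ≤ d, ∑ i ∈ s, a i * ρ i ^ k = β ^ k) (hρ : ∀ i ∈ s, |ρ i| ≤ 1)
    {c : Finset (Fin n) → ℝ} (hdeg : ∀ S, c S ≠ 0 → S.card ≤ d) :
    Ex (fun x => |eval' (noise β c) x|) ≤ (∑ i ∈ s, |a i|) * Ex (fun x => |eval' c x|) :=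
  calc Ex (fun x => |eval' (noise β c) x|)
      ≤ Ex (fun x => ∑ i ∈ s, |a i| * |eval' (noise (ρ i) c) x|) := Ex_mono fun x => by
        rw [eval'_noise_eq_sum_of_moments hmom hdeg]
        exact (abs_sum_le_sum_abs _ _).trans_eq (sum_congr rfl fun i _ => abs_mul _ _)
    _ = ∑ i ∈ s, |a i| * Ex (fun x => |eval' (noise (ρ i) c) x|) := by
        simp only [Ex_sum, Ex_const_mul]
    _ ≤ ∑ i ∈ s, |a i| * Ex (fun x => |eval' c x|) :=
        sum_le_sum fun i hi => mul_le_mul_of_nonneg_left (Ex_abs_eval'_noise_le (hρ i hi) c)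
          (abs_nonneg _)
    _ = (∑ i ∈ s, |a i|) * Ex (fun x => |eval' c x|) := (sum_mul _ _ _).symm

open Polynomial.Chebyshev

theorem noise_L1_lower_bound_degree (n d : ℕ) (c : Finset (Fin n) → ℝ) (α : ℝ)
    (h0 : 0 < α) (h1 : α ≤ 1)
    (hdeg : ∀ S, c S ≠ 0 → S.card ≤ d) :
    α ^ (d ^ 2) * Ex (fun x => |eval' c x|)
      ≤ Ex (fun x => |eval' (fun S => α ^ S.card * c S) x|) := by
  have hβ : 1 ≤ α⁻¹ := (one_le_inv₀ h0).mpr h1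
  have hmom : ∀ k ≤ d, ∑ i ∈ range (d + 1), nodeWeight d i α⁻¹ * node d i ^ k = α⁻¹ ^ k :=
    fun k hk => by
      simpa [mul_comm] using (eval_eq_sum_eval_node_mul_nodeWeight (P := X ^ k)
        (by simpa using hk) α⁻¹).symm
  have hL1 := Ex_abs_eval'_noise_le_of_moments hmom (fun i _ => abs_le.mpr node_mem_Icc)
    (c := noise α c) fun S hS => hdeg S (right_ne_zero_of_mul hS)
  rw [noise_noise, inv_mul_cancel₀ h0.ne', noise_one, sum_abs_nodeWeight d hβ] at hL1
  calc α ^ d ^ 2 * Ex (fun x => |eval' c x|)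
      ≤ α ^ d ^ 2 * (α⁻¹ ^ d ^ 2 * Ex (fun x => |eval' (noise α c) x|)) := by
        gcongr
        exact hL1.trans (mul_le_mul_of_nonneg_right (eval_T_real_le_pow d hβ)
          (Ex_nonneg fun x => abs_nonneg _))
    _ = Ex (fun x => |eval' (noise α c) x|) := by
        rw [← mul_assoc, ← mul_pow, mul_inv_cancel₀ h0.ne', one_pow, one_mul]
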